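/- arXiv:1707.00775 — 3 statements merged into one kernel-verified Lean document; each statement's English description precedes it below -/
import Mathlib

section
/- Let k > 0 and define w(α) := 4 arctan(exp(α/√k)). Then w satisfies the ordinary differential equation k·w''(α) = sin w(α) for all α ∈ ℝ, together with the first-integral relation k·(w'(α))² = 2 − 2 cos w(α) (i.e. the integration constant is l = 1). -/
/-!
With `t = exp (α / √k)` one has `sin (w / 2) = sin (2 arctan t) = 2t / (1 + t²)`, so the profile
solves the first-order equation `w' = (2 / √k) sin (w / 2)`. Differentiating once more gives
`w'' = (2 / k) sin (w / 2) cos (w / 2) = sin w / k`, and squaring gives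
`k w'² = 4 sin² (w / 2) = 2 - 2 cos w`.
-/

open Real

theorem Real.sin_two_mul_arctan (t : ℝ) : sin (2 * arctan t) = 2 * t / (1 + t ^ 2) := by
  rw [sin_two_mul, ← tan_mul_cos (cos_arctan_pos t).ne', tan_arctan,
    show 2 * (t * cos (arctan t)) * cos (arctan t) = 2 * t * cos (arctan t) ^ 2 by ring,
    cos_sq_arctan]
  ring

theorem Real.two_sub_two_mul_cos (x : ℝ) : 2 - 2 * cos x = 4 * sin (x / 2) ^ 2 := by
  conv_lhs => rw [show x = 2 * (x / 2) by ring, cos_two_mul, cos_sq']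
  ring

theorem hasDerivAt_deriv_of_hasDerivAt_mul_sin_half {f : ℝ → ℝ} {a : ℝ}
    (hf : ∀ x, HasDerivAt f (a * sin (f x / 2)) x) (x : ℝ) :
    HasDerivAt (deriv f) (a ^ 2 / 4 * sin (f x)) x := by
  have hderiv : deriv f = fun x => a * sin (f x / 2) := funext fun x => (hf x).deriv
  rw [hderiv]
  refine ((((hf x).div_const 2).sin).const_mul a).congr_deriv ?_
  have hdouble : sin (f x) = 2 * sin (f x / 2) * cos (f x / 2) := by
    rw [← sin_two_mul]
    ring_nf
  rw [hdouble]
  ring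

theorem hasDerivAt_four_mul_arctan_exp_div {c : ℝ} (hc : c ≠ 0) (x : ℝ) :
    HasDerivAt (fun x => 4 * arctan (exp (x / c)))
      (2 / c * sin (4 * arctan (exp (x / c)) / 2)) x := by
  have hexp : HasDerivAt (fun x => exp (x / c)) (exp (x / c) * (1 / c)) x :=
    ((hasDerivAt_id x).div_const c).exp
  refine (hexp.arctan.const_mul 4).congr_deriv ?_
  rw [show 4 * arctan (exp (x / c)) / 2 = 2 * arctan (exp (x / c)) by ring, sin_two_mul_arctan]
  field_simp
  ring

/-- The one-soliton profile `w(α) = 4 arctan(exp(α/√k))` (`k > 0`) satisfies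
`k·w'' = sin w` together with the first integral `k·(w')² = 2 − 2 cos w`
(integration constant `l = 1`). -/
theorem one_soliton_profile (k : ℝ) (hk : 0 < k) :
    ∀ α : ℝ,
      k * deriv (deriv (fun α => 4 * Real.arctan (Real.exp (α / Real.sqrt k)))) α
        = Real.sin (4 * Real.arctan (Real.exp (α / Real.sqrt k))) ∧
      k * (deriv (fun α => 4 * Real.arctan (Real.exp (α / Real.sqrt k))) α) ^ 2
        = 2 - 2 * Real.cos (4 * Real.arctan (Real.exp (α / Real.sqrt k))) := by
  intro α
  have hc : √k ≠ 0 := (sqrt_pos.2 hk).ne'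
  have hck : √k ^ 2 = k := sq_sqrt hk.le
  have hw := hasDerivAt_four_mul_arctan_exp_div hc
  constructor
  · rw [(hasDerivAt_deriv_of_hasDerivAt_mul_sin_half hw α).deriv]
    nth_rw 1 [← hck]
    field_simp
    ring
  · rw [(hw α).deriv, two_sub_two_mul_cos]
    nth_rw 1 [← hck]
    field_simp
    ring
end

section
/- In the travelling-wave Bäcklund setup, assume moreover that λ·w'(α) − sin w(α) ≠ 0 for all α and that b : ℝ → ℝ satisfies b'(α) = (λ w'(α) + sin w(α)) / (λ w'(α) − sin w(α)). Then for any real constant K the function δ(α,β) := f(α)/(a(α)k²) + (c/(a(α)k)) · tanh(c(β + b(α) + K)) satisfies the partial differential equation δ_α = [ (δ² − 1) sin w + 2δ(cos w + λ²/k) + λ(δ² + 1) w' ] / (4λ), where w, w' are evaluated at α. -/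
/-- First partial derivative (w.r.t. the first variable) of a curried function of two
real variables. -/
noncomputable def pd1 (f : ℝ → ℝ → ℝ) (x y : ℝ) : ℝ := deriv (fun x' => f x' y) x

/-- Second partial derivative (w.r.t. the second variable). -/
noncomputable def pd2 (f : ℝ → ℝ → ℝ) (x y : ℝ) : ℝ := deriv (fun y' => f x y') y

/-!
Write `δ = μ + ν tanh θ` with `μ = f/(a k²)`, `ν = c/(a k)` and `θ = c(β + b + K)`. The target is
the Riccati equation `δ_α = P δ² + Q δ + R` with `P = (sin w + λw')/(4λ)`,
`Q = (cos w + λ²/k)/(2λ)` and `R = (λw' − sin w)/(4λ)`. Since `tanh' = 1 − tanh²`, comparing the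
coefficients of `1, tanh θ, tanh² θ` reduces it to three first-order equations for `μ`, `ν`, `θ`.
Those for `θ` and `ν` are rational identities; the one for `μ` also needs `sin² w + cos² w = 1`,
the first integral `k w'² = 2l − 2 cos w`, and `(4kλc)² = λ⁴ − 2klλ² + k²`.
-/

theorem Real.hasDerivAt_tanh (x : ℝ) : HasDerivAt Real.tanh (1 - Real.tanh x ^ 2) x := by
  have h := (Real.hasDerivAt_sinh x).div (Real.hasDerivAt_cosh x) (Real.cosh_pos x).ne'
  rw [show Real.sinh / Real.cosh = Real.tanh from
    funext fun y => (Real.tanh_eq_sinh_div_cosh y).symm] at h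
  refine h.congr_deriv ?_
  rw [Real.tanh_eq_sinh_div_cosh]
  field_simp

theorem HasDerivAt.add_mul_tanh_of_riccati {μ ν θ : ℝ → ℝ} {μ' ν' θ' P Q R x : ℝ}
    (hμ : HasDerivAt μ μ' x) (hν : HasDerivAt ν ν' x) (hθ : HasDerivAt θ θ' x)
    (hθ' : θ' = -P * ν x) (hν' : ν' = (2 * P * μ x + Q) * ν x)
    (hμ' : μ' = P * (μ x ^ 2 + ν x ^ 2) + Q * μ x + R) :
    HasDerivAt (fun y => μ y + ν y * Real.tanh (θ y))
      (P * (μ x + ν x * Real.tanh (θ x)) ^ 2 + Q * (μ x + ν x * Real.tanh (θ x)) + R) x := by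
  refine (hμ.add (hν.mul ((Real.hasDerivAt_tanh (θ x)).comp x hθ))).congr_deriv ?_
  rw [Function.comp_apply, hθ', hν', hμ']
  ring

section BacklundCoefficients

variable {k lam l c S C W a f b' : ℝ}

/-- Solving for `sin w` in terms of `a` leaves only monomial denominators in the identities below. -/
theorem sin_eq_of_backlund_a (hk : k ≠ 0) (hlam : lam ≠ 0)
    (ha : a = S / (4 * k * lam) - W / (4 * k)) : S = 4 * k * lam * a + lam * W := by
  rw [ha]
  field_simp
  ring

theorem backlund_phase_deriv_eq (hk : k ≠ 0) (hlam : lam ≠ 0)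
    (ha : a = S / (4 * k * lam) - W / (4 * k)) (ha0 : a ≠ 0)
    (hb' : b' = (lam * W + S) / (lam * W - S)) :
    c * b' = -((S + lam * W) / (4 * lam)) * (c / (a * k)) := by
  obtain rfl := sin_eq_of_backlund_a hk hlam ha
  rw [hb', show lam * W - (4 * k * lam * a + lam * W) = -(4 * k * lam * a) by ring]
  field_simp
  ring

theorem backlund_amplitude_deriv_eq (hk : k ≠ 0) (hlam : lam ≠ 0)
    (ha : a = S / (4 * k * lam) - W / (4 * k)) (ha0 : a ≠ 0)
    (hf : f = lam / 4 - k * C / (4 * lam)) :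
    (0 * (a * k) - c * ((k * C * W - lam * S) / (4 * k ^ 2 * lam) * k)) / (a * k) ^ 2
      = (2 * ((S + lam * W) / (4 * lam)) * (f / (a * k ^ 2)) + (C + lam ^ 2 / k) / (2 * lam))
          * (c / (a * k)) := by
  obtain rfl := sin_eq_of_backlund_a hk hlam ha
  subst hf
  field_simp
  ring

theorem backlund_center_deriv_eq (hk : k ≠ 0) (hlam : lam ≠ 0)
    (ha : a = S / (4 * k * lam) - W / (4 * k)) (ha0 : a ≠ 0)
    (hf : f = lam / 4 - k * C / (4 * lam))
    (hSC : S ^ 2 + C ^ 2 = 1) (hfi : k * W ^ 2 = 2 * l - 2 * C)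
    (hc : (4 * k * lam * c) ^ 2 = lam ^ 4 - 2 * k * l * lam ^ 2 + k ^ 2) :
    (k * S * W / (4 * lam) * (a * k ^ 2) - f * ((k * C * W - lam * S) / (4 * k ^ 2 * lam) * k ^ 2))
        / (a * k ^ 2) ^ 2
      = (S + lam * W) / (4 * lam) * ((f / (a * k ^ 2)) ^ 2 + (c / (a * k)) ^ 2)
        + (C + lam ^ 2 / k) / (2 * lam) * (f / (a * k ^ 2)) + (lam * W - S) / (4 * lam) := by
  obtain rfl := sin_eq_of_backlund_a hk hlam ha
  subst hf
  field_simp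
  -- every relation enters multiplied by `S + λW = 2λ(2ka + W)`
  linear_combination 4 * (2 * k * a + W) * (k ^ 2 * hSC - k * lam ^ 2 * hfi - hc)

end BacklundCoefficients

theorem delta_alpha_equation_general (k lam l K : ℝ) (hk : k ≠ 0) (hlam : lam ≠ 0)
    (w : ℝ → ℝ) (hw : Differentiable ℝ w) (hw' : Differentiable ℝ (deriv w))
    (hode : ∀ α : ℝ, k * deriv (deriv w) α = Real.sin (w α))
    (hfi : ∀ α : ℝ, k * (deriv w α) ^ 2 = 2 * l - 2 * Real.cos (w α))
    (hdisc : lam ^ 4 - 2 * k * l * lam ^ 2 + k ^ 2 > 0)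
    (a f : ℝ → ℝ) (c : ℝ)
    (ha : ∀ α : ℝ, a α = Real.sin (w α) / (4 * k * lam) - deriv w α / (4 * k))
    (hf : ∀ α : ℝ, f α = lam / 4 - k * Real.cos (w α) / (4 * lam))
    (hc : c = Real.sqrt (lam ^ 4 - 2 * k * l * lam ^ 2 + k ^ 2) / (4 * k * lam))
    (ha0 : ∀ α : ℝ, a α ≠ 0)
    (b : ℝ → ℝ) (hb : Differentiable ℝ b)
    (hb' : ∀ α : ℝ, deriv b α
      = (lam * deriv w α + Real.sin (w α)) / (lam * deriv w α - Real.sin (w α)))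
    (δ : ℝ → ℝ → ℝ)
    (hδ : ∀ α β : ℝ, δ α β
      = f α / (a α * k ^ 2) + (c / (a α * k)) * Real.tanh (c * (β + b α + K))) :
    ∀ α β : ℝ, pd1 δ α β
      = (((δ α β) ^ 2 - 1) * Real.sin (w α)
          + 2 * δ α β * (Real.cos (w α) + lam ^ 2 / k)
          + lam * ((δ α β) ^ 2 + 1) * deriv w α) / (4 * lam) := by
  intro α β
  have hwα : HasDerivAt w (deriv w α) α := (hw α).hasDerivAt
  have hw'α : HasDerivAt (deriv w) (Real.sin (w α) / k) α := by
    rw [← hode α, mul_div_cancel_left₀ _ hk]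
    exact (hw' α).hasDerivAt
  have ha' : HasDerivAt a ((k * Real.cos (w α) * deriv w α - lam * Real.sin (w α))
      / (4 * k ^ 2 * lam)) α := by
    rw [show a = _ from funext ha]
    refine ((hwα.sin.div_const (4 * k * lam)).sub (hw'α.div_const (4 * k))).congr_deriv ?_
    field_simp
  have hf' : HasDerivAt f (k * Real.sin (w α) * deriv w α / (4 * lam)) α := by
    rw [show f = _ from funext hf]
    refine ((hwα.cos.const_mul k).div_const (4 * lam) |>.const_sub (lam / 4)).congr_deriv ?_
    ring
  have hθ : HasDerivAt (fun x => c * (β + b x + K)) (c * deriv b α) α :=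
    (((hb α).hasDerivAt.const_add β).add_const K).const_mul c
  have hc2 : (4 * k * lam * c) ^ 2 = lam ^ 4 - 2 * k * l * lam ^ 2 + k ^ 2 := by
    rw [hc, mul_div_cancel₀ _ (by positivity)]
    exact Real.sq_sqrt hdisc.le
  have hδα := HasDerivAt.add_mul_tanh_of_riccati
    (hf'.fun_div (ha'.mul_const (k ^ 2)) (by have := ha0 α; positivity))
    ((hasDerivAt_const α c).fun_div (ha'.mul_const k) (by have := ha0 α; positivity)) hθ
    (backlund_phase_deriv_eq hk hlam (ha α) (ha0 α) (hb' α))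
    (backlund_amplitude_deriv_eq hk hlam (ha α) (ha0 α) (hf α))
    (backlund_center_deriv_eq hk hlam (ha α) (ha0 α) (hf α) (Real.sin_sq_add_cos_sq _) (hfi α) hc2)
  rw [pd1, funext fun x => hδ x β, hδα.deriv, hδ α β]
  ring

/-- In the travelling-wave Bäcklund setup, if moreover
`b' = (λw' + sin w)/(λw' − sin w)`, then the ansatz
`δ(α,β) = f(α)/(a(α)k²) + (c/(a(α)k)) tanh(c(β + b(α) + K))`
satisfies the α-equation of the Bäcklund system:
`δ_α = [(δ² − 1) sin w + 2δ(cos w + λ²/k) + λ(δ² + 1) w'] / (4λ)`. -/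
theorem delta_alpha_equation (k lam l K : ℝ) (hk : k ≠ 0) (hlam : lam ≠ 0)
    (w : ℝ → ℝ) (hw : Differentiable ℝ w) (hw' : Differentiable ℝ (deriv w))
    (hode : ∀ α : ℝ, k * deriv (deriv w) α = Real.sin (w α))
    (hfi : ∀ α : ℝ, k * (deriv w α) ^ 2 = 2 * l - 2 * Real.cos (w α))
    (hdisc : lam ^ 4 - 2 * k * l * lam ^ 2 + k ^ 2 > 0)
    (a f : ℝ → ℝ) (c : ℝ)
    (ha : ∀ α : ℝ, a α = Real.sin (w α) / (4 * k * lam) - deriv w α / (4 * k))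
    (hf : ∀ α : ℝ, f α = lam / 4 - k * Real.cos (w α) / (4 * lam))
    (hc : c = Real.sqrt (lam ^ 4 - 2 * k * l * lam ^ 2 + k ^ 2) / (4 * k * lam))
    (ha0 : ∀ α : ℝ, a α ≠ 0)
    (hne : ∀ α : ℝ, lam * deriv w α - Real.sin (w α) ≠ 0)
    (b : ℝ → ℝ) (hb : Differentiable ℝ b)
    (hb' : ∀ α : ℝ, deriv b α
      = (lam * deriv w α + Real.sin (w α)) / (lam * deriv w α - Real.sin (w α)))
    (δ : ℝ → ℝ → ℝ)
    (hδ : ∀ α β : ℝ, δ α β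
      = f α / (a α * k ^ 2) + (c / (a α * k)) * Real.tanh (c * (β + b α + K))) :
    ∀ α β : ℝ, pd1 δ α β
      = (((δ α β) ^ 2 - 1) * Real.sin (w α)
          + 2 * δ α β * (Real.cos (w α) + lam ^ 2 / k)
          + lam * ((δ α β) ^ 2 + 1) * deriv w α) / (4 * lam) :=
  delta_alpha_equation_general k lam l K hk hlam w hw hw' hode hfi hdisc a f c ha hf hc ha0 b hb hb'
    δ hδ
end

section
/- Let λ ≠ 0 and let ω, ω̃ : ℝ² → ℝ be differentiable functions satisfying the Bäcklund transformation system with parameter λ, and let g : ℝ² → ℝ be a differentiable function satisfying g_ξ = λ g cos((ω̃ + ω)/2) and g_η = (g/λ) cos((ω̃ − ω)/2). Then the 1-forms defining the associated potentials x and y are closed, i.e. the mixed-derivative compatibility conditions hold: ∂_η[ λ g sin((ω̃ + ω)/2) ] = ∂_ξ[ (1/λ) g sin((ω̃ − ω)/2) ] (in fact both sides equal g sin ω̃), and ∂_η[ (λ/g) sin((ω̃ + ω)/2) ] = ∂_ξ[ −(1/(λ g)) sin((ω̃ − ω)/2) ] wherever g ≠ 0 (in fact both sides equal −(1/g) sin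 ω). -/
/-- The pair `(ω, ω̃)` satisfies the Bäcklund transformation system for the sine-Gordon
equation with parameter `λ`. -/
def IsBacklund (lam : ℝ) (ω ω' : ℝ → ℝ → ℝ) : Prop :=
  (∀ ξ η : ℝ, pd1 (fun ξ η => (ω' ξ η - ω ξ η) / 2) ξ η
      = lam * Real.sin ((ω' ξ η + ω ξ η) / 2)) ∧
  (∀ ξ η : ℝ, pd2 (fun ξ η => (ω' ξ η + ω ξ η) / 2) ξ η
      = (1 / lam) * Real.sin ((ω' ξ η - ω ξ η) / 2))

/-!
Write `s = (ω̃ + ω)/2` and `d = (ω̃ − ω)/2`, so that `ω̃ = s + d` and `ω = s − d`. Along a line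
`ξ = const` the Bäcklund system and the equation for `g` give `s_η = λ⁻¹ sin d` and
`g_η = λ⁻¹ g cos d`, so the product rule turns `∂_η (λ g sin s)` into `g (sin s cos d + cos s sin d)`
and `∂_η ((λ/g) sin s)` into `(1/g) (cos s sin d − sin s cos d)`: the addition formulas for
`sin (s ± d)` give `g sin ω̃` and `−(1/g) sin ω`. Along a line `η = const` the same happens with the
roles of `s` and `d` exchanged, using `d_ξ = λ sin s` and `g_ξ = λ g cos s`.
-/

open Real

theorem Differentiable.hasDerivAt_pd1 {f : ℝ → ℝ → ℝ}
    (hf : Differentiable ℝ fun p : ℝ × ℝ => f p.1 p.2) (x y : ℝ) :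
    HasDerivAt (fun x' => f x' y) (pd1 f x y) x :=
  (hf.comp (differentiable_id.prodMk (differentiable_const y))).differentiableAt.hasDerivAt

theorem Differentiable.hasDerivAt_pd2 {f : ℝ → ℝ → ℝ}
    (hf : Differentiable ℝ fun p : ℝ × ℝ => f p.1 p.2) (x y : ℝ) :
    HasDerivAt (fun y' => f x y') (pd2 f x y) y :=
  (hf.comp ((differentiable_const x).prodMk differentiable_id)).differentiableAt.hasDerivAt

section Slice

variable {lam : ℝ} {g s d : ℝ → ℝ} {t a b : ℝ}

theorem hasDerivAt_const_mul_mul_sin (hlam : lam ≠ 0)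
    (hs : HasDerivAt s (1 / lam * sin b) t) (hg : HasDerivAt g (g t / lam * cos b) t) :
    HasDerivAt (fun t => lam * g t * sin (s t)) (g t * sin (s t + b)) t := by
  refine ((hg.const_mul lam).mul hs.sin).congr_deriv ?_
  rw [sin_add]
  field_simp

theorem hasDerivAt_inv_const_mul_mul_sin (hlam : lam ≠ 0)
    (hd : HasDerivAt d (lam * sin a) t) (hg : HasDerivAt g (lam * g t * cos a) t) :
    HasDerivAt (fun t => 1 / lam * g t * sin (d t)) (g t * sin (a + d t)) t := by
  refine ((hg.const_mul (1 / lam)).mul hd.sin).congr_deriv ?_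
  rw [sin_add]
  field_simp
  ring

theorem hasDerivAt_const_div_mul_sin (hlam : lam ≠ 0) (hgt : g t ≠ 0)
    (hs : HasDerivAt s (1 / lam * sin b) t) (hg : HasDerivAt g (g t / lam * cos b) t) :
    HasDerivAt (fun t => lam / g t * sin (s t)) (-(1 / g t) * sin (s t - b)) t := by
  refine (((hasDerivAt_const t lam).fun_div hg hgt).mul hs.sin).congr_deriv ?_
  rw [sin_sub]
  field_simp
  ring

theorem hasDerivAt_neg_inv_mul_mul_sin (hlam : lam ≠ 0) (hgt : g t ≠ 0)
    (hd : HasDerivAt d (lam * sin a) t) (hg : HasDerivAt g (lam * g t * cos a) t) :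
    HasDerivAt (fun t => -(1 / (lam * g t)) * sin (d t)) (-(1 / g t) * sin (a - d t)) t := by
  refine ((((hasDerivAt_const t 1).fun_div (hg.const_mul lam) (mul_ne_zero hlam hgt)).fun_neg).mul
    hd.sin).congr_deriv ?_
  rw [sin_sub]
  field_simp
  ring

end Slice

namespace IsBacklund

variable {lam : ℝ} {ω ω' : ℝ → ℝ → ℝ}

theorem hasDerivAt_halfDiff (hB : IsBacklund lam ω ω')
    (hω : Differentiable ℝ fun p : ℝ × ℝ => ω p.1 p.2)
    (hω' : Differentiable ℝ fun p : ℝ × ℝ => ω' p.1 p.2) (ξ η : ℝ) :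
    HasDerivAt (fun x => (ω' x η - ω x η) / 2) (lam * sin ((ω' ξ η + ω ξ η) / 2)) ξ :=
  hB.1 ξ η ▸ Differentiable.hasDerivAt_pd1 (f := fun ξ η => (ω' ξ η - ω ξ η) / 2)
    (by fun_prop) ξ η

theorem hasDerivAt_halfSum (hB : IsBacklund lam ω ω')
    (hω : Differentiable ℝ fun p : ℝ × ℝ => ω p.1 p.2)
    (hω' : Differentiable ℝ fun p : ℝ × ℝ => ω' p.1 p.2) (ξ η : ℝ) :
    HasDerivAt (fun y => (ω' ξ y + ω ξ y) / 2) (1 / lam * sin ((ω' ξ η - ω ξ η) / 2)) η :=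
  hB.2 ξ η ▸ Differentiable.hasDerivAt_pd2 (f := fun ξ η => (ω' ξ η + ω ξ η) / 2)
    (by fun_prop) ξ η

end IsBacklund

/-- Compatibility (closedness) of the 1-forms defining the associated potentials `x`
and `y`: both mixed-derivative conditions hold, the common values being `g sin ω̃` and
`−(1/g) sin ω` respectively. -/
theorem potentials_one_forms_closed (lam : ℝ) (hlam : lam ≠ 0)
    (ω ω' g : ℝ → ℝ → ℝ)
    (hω : Differentiable ℝ fun p : ℝ × ℝ => ω p.1 p.2)
    (hω' : Differentiable ℝ fun p : ℝ × ℝ => ω' p.1 p.2)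
    (hgdiff : Differentiable ℝ fun p : ℝ × ℝ => g p.1 p.2)
    (hB : IsBacklund lam ω ω')
    (hgξ : ∀ ξ η : ℝ, pd1 g ξ η = lam * g ξ η * Real.cos ((ω' ξ η + ω ξ η) / 2))
    (hgη : ∀ ξ η : ℝ, pd2 g ξ η = (g ξ η / lam) * Real.cos ((ω' ξ η - ω ξ η) / 2)) :
    ∀ ξ η : ℝ,
      (pd2 (fun ξ η => lam * g ξ η * Real.sin ((ω' ξ η + ω ξ η) / 2)) ξ η
          = pd1 (fun ξ η => (1 / lam) * g ξ η * Real.sin ((ω' ξ η - ω ξ η) / 2)) ξ η ∧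
        pd2 (fun ξ η => lam * g ξ η * Real.sin ((ω' ξ η + ω ξ η) / 2)) ξ η
          = g ξ η * Real.sin (ω' ξ η)) ∧
      (g ξ η ≠ 0 →
        pd2 (fun ξ η => (lam / g ξ η) * Real.sin ((ω' ξ η + ω ξ η) / 2)) ξ η
            = pd1 (fun ξ η => -(1 / (lam * g ξ η)) * Real.sin ((ω' ξ η - ω ξ η) / 2)) ξ η ∧
          pd2 (fun ξ η => (lam / g ξ η) * Real.sin ((ω' ξ η + ω ξ η) / 2)) ξ η
            = -(1 / g ξ η) * Real.sin (ω ξ η)) := by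
  intro ξ η
  have hs := hB.hasDerivAt_halfSum hω hω' ξ η
  have hd := hB.hasDerivAt_halfDiff hω hω' ξ η
  have hg_ξ := hgξ ξ η ▸ hgdiff.hasDerivAt_pd1 ξ η
  have hg_η := hgη ξ η ▸ hgdiff.hasDerivAt_pd2 ξ η
  have hsum : (ω' ξ η + ω ξ η) / 2 + (ω' ξ η - ω ξ η) / 2 = ω' ξ η := by ring
  have hdiff : (ω' ξ η + ω ξ η) / 2 - (ω' ξ η - ω ξ η) / 2 = ω ξ η := by ring
  have hx_η : pd2 (fun ξ η => lam * g ξ η * sin ((ω' ξ η + ω ξ η) / 2)) ξ η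
      = g ξ η * sin (ω' ξ η) :=
    hsum ▸ (hasDerivAt_const_mul_mul_sin hlam hs hg_η).deriv
  have hx_ξ : pd1 (fun ξ η => 1 / lam * g ξ η * sin ((ω' ξ η - ω ξ η) / 2)) ξ η
      = g ξ η * sin (ω' ξ η) :=
    hsum ▸ (hasDerivAt_inv_const_mul_mul_sin (g := fun x => g x η) hlam hd hg_ξ).deriv
  refine ⟨⟨hx_η.trans hx_ξ.symm, hx_η⟩, fun hg0 => ?_⟩
  have hy_η : pd2 (fun ξ η => lam / g ξ η * sin ((ω' ξ η + ω ξ η) / 2)) ξ η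
      = -(1 / g ξ η) * sin (ω ξ η) :=
    hdiff ▸ (hasDerivAt_const_div_mul_sin hlam hg0 hs hg_η).deriv
  have hy_ξ : pd1 (fun ξ η => -(1 / (lam * g ξ η)) * sin ((ω' ξ η - ω ξ η) / 2)) ξ η
      = -(1 / g ξ η) * sin (ω ξ η) :=
    hdiff ▸ (hasDerivAt_neg_inv_mul_mul_sin (g := fun x => g x η) hlam hg0 hd hg_ξ).deriv
  exact ⟨hy_η.trans hy_ξ.symm, hy_η⟩
end
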